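/- arXiv:math/0204296 — 2 statements merged into one kernel-verified Lean document; each statement's English description precedes it below -/
import Mathlib

section
/- Let A ∈ End(ℂ^n) satisfy the reflection equation with the standard Uq(gl(n)) braid matrix (q generic). If for some indices i > m the entry A^m_i is nonzero (i.e. i ∈ Y₊, a nonzero entry above the diagonal in column i with row m = σ(i) < i), then the diagonal entry A^i_i = 0; and if for some i < m the entry A^m_i is nonzero, then A^m_m = 0. -/
/-!
Write `T = A₂ S A₂`; its entries are `T (a, b) (c, d) = Σ_e s_{ae} A b e * A e d` if `a = c` and
`A b c * A a d` otherwise, and the reflection equation reads `S T = T S`. Only four families of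
its entries are needed. For `m < i < k` the entry `((m, m), (i, k))` gives
`(q⁻¹ - 1) A m i * A m k = 0`, and the entry `((i, m), (i, i))` gives
`A i i * A m i = q Σ_d s_{id} A m d * A d i`. If `A m i ≠ 0`, the first relation kills the terms
`d > i` of the sum and `s_{id} = 0` for `d < i`, so `(1 - q²) A m i * A i i = 0`. The case `i < m`
is the same argument along column `i`, with the entries `((m, k), (i, i))` and `((m, m), (m, i))`.
-/

open Matrix Kronecker

/-- The coefficient `s_{ik}`: `q - q⁻¹` if `i < k`, `q` if `i = k`, `0` if `i > k`. -/
noncomputable def sCoeff {n : ℕ} (q : ℂ) (i k : Fin n) : ℂ :=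
  if (i : ℕ) < (k : ℕ) then q - q⁻¹ else if i = k then q else 0

/-- The standard `U_q(gl(n))` braid matrix
`S = Σ_{i,k} s_{ik} e^i_i ⊗ e^k_k + Σ_{i≠j} e^i_j ⊗ e^j_i` on `ℂ^n ⊗ ℂ^n`. -/
noncomputable def braidS (n : ℕ) (q : ℂ) :
    Matrix (Fin n × Fin n) (Fin n × Fin n) ℂ :=
  fun p r =>
    (if p.1 = r.1 ∧ p.2 = r.2 then sCoeff q p.1 p.2 else 0) +
    (if p.1 ≠ p.2 ∧ r.1 = p.2 ∧ r.2 = p.1 then 1 else 0)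

/-- `A₂ = 1 ⊗ A` on `ℂ^n ⊗ ℂ^n`. -/
noncomputable def A2 {n : ℕ} (A : Matrix (Fin n) (Fin n) ℂ) :
    Matrix (Fin n × Fin n) (Fin n × Fin n) ℂ :=
  (1 : Matrix (Fin n) (Fin n) ℂ) ⊗ₖ A

/-- The reflection equation `S A₂ S A₂ = A₂ S A₂ S`. -/
noncomputable def RE (n : ℕ) (q : ℂ) (A : Matrix (Fin n) (Fin n) ℂ) : Prop :=
  braidS n q * A2 A * braidS n q * A2 A = A2 A * braidS n q * A2 A * braidS n q

section

variable {n : ℕ} (q : ℂ)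

theorem sCoeff_self (i : Fin n) : sCoeff q i i = q := by simp [sCoeff]

theorem sCoeff_of_lt {i k : Fin n} (h : i < k) : sCoeff q i k = q - q⁻¹ := if_pos h

theorem sCoeff_of_gt {i k : Fin n} (h : k < i) : sCoeff q i k = 0 := by
  simp [sCoeff, h.ne', Fin.lt_def.mp h |>.not_gt]

theorem braidS_apply (p r : Fin n × Fin n) :
    braidS n q p r =
      (if p = r then sCoeff q p.1 p.2 else 0) + (if p.1 ≠ p.2 ∧ r = p.swap then 1 else 0) := by
  simp [braidS, Prod.ext_iff, eq_comm]

theorem braidS_mul_apply (M : Matrix (Fin n × Fin n) (Fin n × Fin n) ℂ) (p r : Fin n × Fin n) :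
    (braidS n q * M) p r = sCoeff q p.1 p.2 * M p r + if p.1 = p.2 then 0 else M p.swap r := by
  simp [mul_apply, braidS_apply, add_mul, ite_mul, Finset.sum_add_distrib, ite_and]

theorem braidS_transpose : (braidS n q)ᵀ = braidS n q := by
  ext ⟨a, b⟩ ⟨c, d⟩
  simp only [transpose_apply, braidS]
  grind

theorem mul_braidS_apply (M : Matrix (Fin n × Fin n) (Fin n × Fin n) ℂ) (p r : Fin n × Fin n) :
    (M * braidS n q) p r = M p r * sCoeff q r.1 r.2 + if r.1 = r.2 then 0 else M p r.swap := by
  rw [← transpose_apply (M * braidS n q), transpose_mul, braidS_transpose, braidS_mul_apply,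
    transpose_apply, transpose_apply, mul_comm]

theorem mul_A2_apply (A : Matrix (Fin n) (Fin n) ℂ)
    (M : Matrix (Fin n × Fin n) (Fin n × Fin n) ℂ) (p : Fin n × Fin n) (c d : Fin n) :
    (M * A2 A) p (c, d) = ∑ f, M p (c, f) * A f d := by
  simp [A2, mul_apply, Fintype.sum_prod_type, one_apply, ite_mul, Finset.sum_ite_eq']

theorem A2_apply (A : Matrix (Fin n) (Fin n) ℂ) (a b c d : Fin n) :
    A2 A (a, b) (c, d) = if a = c then A b d else 0 := by
  simp [A2, one_apply]

theorem A2_mul_apply (A : Matrix (Fin n) (Fin n) ℂ)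
    (M : Matrix (Fin n × Fin n) (Fin n × Fin n) ℂ) (a b : Fin n) (r : Fin n × Fin n) :
    (A2 A * M) (a, b) r = ∑ e, A b e * M (a, e) r := by
  simp [A2, mul_apply, Fintype.sum_prod_type, one_apply, ite_mul, Finset.sum_ite_eq]

theorem A2_mul_braidS_mul_A2_apply (A : Matrix (Fin n) (Fin n) ℂ) (a b c d : Fin n) :
    (A2 A * braidS n q * A2 A) (a, b) (c, d) =
      if a = c then ∑ e, sCoeff q c e * (A b e * A e d) else A b c * A a d := by
  simp only [mul_A2_apply, mul_braidS_apply, Prod.swap_prod_mk, A2_apply]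
  split_ifs with hac
  · subst hac
    exact Finset.sum_congr rfl fun x _ => by split_ifs <;> ring
  · rw [Fintype.sum_eq_single a fun x hx => by simp [Ne.symm hx]]
    simp [Ne.symm hac]

variable {q} {A : Matrix (Fin n) (Fin n) ℂ}

theorem RE.apply_eq (hA : RE n q A) (a b c d : Fin n) :
    sCoeff q a b * (A2 A * braidS n q * A2 A) (a, b) (c, d) +
        (if a = b then 0 else (A2 A * braidS n q * A2 A) (b, a) (c, d)) =
      (A2 A * braidS n q * A2 A) (a, b) (c, d) * sCoeff q c d +
        (if c = d then 0 else (A2 A * braidS n q * A2 A) (a, b) (d, c)) := by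
  have h := congrFun₂ hA (a, b) (c, d)
  rw [show braidS n q * A2 A * braidS n q * A2 A = braidS n q * (A2 A * braidS n q * A2 A) by
    simp only [Matrix.mul_assoc], braidS_mul_apply, mul_braidS_apply] at h
  exact h

theorem RE.row_mul_eq_zero (hA : RE n q A) (hq : q ≠ 1) {m i k : Fin n}
    (hmi : m < i) (hik : i < k) : A m i * A m k = 0 := by
  have h := hA.apply_eq m m i k
  simp only [A2_mul_braidS_mul_A2_apply, sCoeff_self, sCoeff_of_lt q hik, hmi.ne, hik.ne,
    (hmi.trans hik).ne, if_false, if_true] at h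
  have h' : (q⁻¹ - 1) * (A m i * A m k) = 0 := by linear_combination h
  exact (mul_eq_zero.mp h').resolve_left (sub_ne_zero.mpr (inv_ne_one.mpr hq))

theorem RE.col_mul_eq_zero (hA : RE n q A) (hq : q ≠ 1) {m i k : Fin n}
    (him : i < m) (hmk : m < k) : A m i * A k i = 0 := by
  have h := hA.apply_eq m k i i
  simp only [A2_mul_braidS_mul_A2_apply, sCoeff_self, sCoeff_of_lt q hmk, him.ne', hmk.ne,
    (him.trans hmk).ne', if_false, if_true] at h
  have h' : (q⁻¹ - 1) * (A m i * A k i) = 0 := by linear_combination -h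
  exact (mul_eq_zero.mp h').resolve_left (sub_ne_zero.mpr (inv_ne_one.mpr hq))

theorem RE.diag_mul_eq_of_lt (hA : RE n q A) {m i : Fin n} (hmi : m < i) :
    A i i * A m i = q * ∑ d, sCoeff q i d * (A m d * A d i) := by
  have h := hA.apply_eq i m i i
  simp only [A2_mul_braidS_mul_A2_apply, sCoeff_self, sCoeff_of_gt q hmi, hmi.ne, hmi.ne',
    if_false, if_true] at h
  linear_combination h

theorem RE.diag_mul_eq_of_gt (hA : RE n q A) {m i : Fin n} (him : i < m) :
    q * ∑ d, sCoeff q m d * (A m d * A d i) = A m i * A m m := by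
  have h := hA.apply_eq m m m i
  simp only [A2_mul_braidS_mul_A2_apply, sCoeff_self, sCoeff_of_gt q him, him.ne',
    if_false, if_true] at h
  linear_combination h

theorem RE.sum_sCoeff_mul_eq_of_lt (hA : RE n q A) (hq : q ≠ 1) {m i : Fin n} (hmi : m < i)
    (hne : A m i ≠ 0) : ∑ d, sCoeff q i d * (A m d * A d i) = q * (A m i * A i i) := by
  rw [Fintype.sum_eq_single i fun d hd => ?_, sCoeff_self]
  rcases lt_or_gt_of_ne hd with hdi | hid
  · rw [sCoeff_of_gt q hdi, zero_mul]
  · rw [(mul_eq_zero.mp (hA.row_mul_eq_zero hq hmi hid)).resolve_left hne, zero_mul, mul_zero]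

theorem RE.sum_sCoeff_mul_eq_of_gt (hA : RE n q A) (hq : q ≠ 1) {m i : Fin n} (him : i < m)
    (hne : A m i ≠ 0) : ∑ d, sCoeff q m d * (A m d * A d i) = q * (A m m * A m i) := by
  rw [Fintype.sum_eq_single m fun d hd => ?_, sCoeff_self]
  rcases lt_or_gt_of_ne hd with hdm | hmd
  · rw [sCoeff_of_gt q hdm, zero_mul]
  · rw [(mul_eq_zero.mp (hA.col_mul_eq_zero hq him hmd)).resolve_left hne, mul_zero, mul_zero]

theorem RE.diag_eq_zero_of_lt (hA : RE n q A) (hq2 : q ^ 2 ≠ 1) {m i : Fin n} (hmi : m < i)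
    (hne : A m i ≠ 0) : A i i = 0 := by
  have hq : q ≠ 1 := by rintro rfl; exact hq2 (one_pow 2)
  have h := hA.diag_mul_eq_of_lt hmi
  rw [hA.sum_sCoeff_mul_eq_of_lt hq hmi hne] at h
  have h' : (1 - q ^ 2) * A m i * A i i = 0 := by linear_combination h
  simpa [sub_ne_zero.mpr (Ne.symm hq2), hne] using h'

theorem RE.diag_eq_zero_of_gt (hA : RE n q A) (hq2 : q ^ 2 ≠ 1) {m i : Fin n} (him : i < m)
    (hne : A m i ≠ 0) : A m m = 0 := by
  have hq : q ≠ 1 := by rintro rfl; exact hq2 (one_pow 2)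
  have h := hA.diag_mul_eq_of_gt him
  rw [hA.sum_sCoeff_mul_eq_of_gt hq him hne] at h
  have h' : (q ^ 2 - 1) * A m i * A m m = 0 := by linear_combination h
  simpa [sub_ne_zero.mpr hq2, hne] using h'

end

theorem RE_vanishing_diagonal_general (n : ℕ) (q : ℂ)
    (hq2 : q ^ 2 ≠ 1) (A : Matrix (Fin n) (Fin n) ℂ) (hA : RE n q A) :
    (∀ i m : Fin n, (m : ℕ) < (i : ℕ) → A m i ≠ 0 → A i i = 0) ∧
    (∀ i m : Fin n, (i : ℕ) < (m : ℕ) → A m i ≠ 0 → A m m = 0) :=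
  ⟨fun _ _ => hA.diag_eq_zero_of_lt hq2, fun _ _ => hA.diag_eq_zero_of_gt hq2⟩

/-- For a solution of the reflection equation: if `A^m_i ≠ 0` with `m < i`
(a nonzero entry above the diagonal in column `i`) then `A^i_i = 0`, and if
`A^m_i ≠ 0` with `i < m` then `A^m_m = 0`. -/
theorem RE_vanishing_diagonal (n : ℕ) (hn : 1 ≤ n) (q : ℂ) (hq : q ≠ 0)
    (hq2 : q ^ 2 ≠ 1) (A : Matrix (Fin n) (Fin n) ℂ) (hA : RE n q A) :
    (∀ i m : Fin n, (m : ℕ) < (i : ℕ) → A m i ≠ 0 → A i i = 0) ∧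
    (∀ i m : Fin n, (i : ℕ) < (m : ℕ) → A m i ≠ 0 → A m m = 0) :=
  RE_vanishing_diagonal_general n q hq2 A hA
end

section
/- If A ∈ M_n(ℂ) satisfies the reflection equation with the standard Uq(gl(n)) braid matrix (q generic) and A is diagonal, then A = λ Σ_{i=1}^{k} e^i_i for some λ ∈ ℂ and some 0 ≤ k ≤ n; that is, the diagonal solutions are exactly the matrices P_k with a constant λ in the first k diagonal positions and 0 elsewhere. -/
/-!
For diagonal `A = diag(a₁, …, aₙ)` and `i < j`, the `((i,j),(j,i))` entry of the reflection
equation reads `(q - q⁻¹) aⱼ aᵢ = (q - q⁻¹) aⱼ²`, because column `(j,i)` of `S` is the unit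
vector at `(i,j)` and `S_{(i,j),(i,j)} = q - q⁻¹`. For generic `q` this says `aⱼ ≠ 0 → aᵢ = aⱼ`,
so the nonzero diagonal entries form an initial segment on which `A` is constant.
-/

open Matrix Kronecker

theorem exists_const_initial_segment {M : Type*} [Zero M] {n : ℕ} (a : Fin n → M)
    (h : ∀ i j, i ≤ j → a j ≠ 0 → a i = a j) :
    ∃ (lam : M) (k : ℕ), k ≤ n ∧ ∀ i, a i = if (i : ℕ) + 1 ≤ k then lam else 0 := by
  classical
  by_cases hsupp : ∃ j, a j ≠ 0
  · obtain ⟨j, hj, hmax⟩ := Finset.exists_max_image (Finset.univ.filter fun j => a j ≠ 0) id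
      (by simpa [Finset.Nonempty] using hsupp)
    have hj : a j ≠ 0 := (Finset.mem_filter.mp hj).2
    refine ⟨a j, j + 1, j.isLt, fun i => ?_⟩
    split_ifs with hij
    · exact h i j (Fin.le_def.mpr (by omega)) hj
    · by_contra hi
      have hle : i ≤ j := hmax i (Finset.mem_filter.mpr ⟨Finset.mem_univ i, hi⟩)
      exact hij (by rw [Fin.le_def] at hle; omega)
  · simp only [not_exists, not_not] at hsupp
    exact ⟨0, 0, Nat.zero_le n, fun i => by simp [hsupp i]⟩

theorem sub_inv_ne_zero_of_sq_ne_one {K : Type*} [Field K] {q : K} (hq : q ≠ 0)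
    (hq2 : q ^ 2 ≠ 1) : q - q⁻¹ ≠ 0 := by
  intro h
  apply hq2
  field_simp at h
  linear_combination h

section braidS

variable {n : ℕ} (q : ℂ) {i j : Fin n}

theorem braidS_apply_self_of_lt (hij : i < j) : braidS n q (i, j) (i, j) = q - q⁻¹ := by
  simp [braidS, sCoeff, Fin.lt_def.mp hij, hij.ne]

theorem braidS_apply_swap_of_lt (hij : i < j) (t : Fin n × Fin n) :
    braidS n q t (j, i) = if t = (i, j) then 1 else 0 := by
  obtain ⟨t₁, t₂⟩ := t
  have hji : ¬ (j : ℕ) < i := Nat.lt_asymm (Fin.lt_def.mp hij)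
  by_cases h : t₁ = i ∧ t₂ = j
  · obtain ⟨rfl, rfl⟩ := h
    simp [braidS, hij.ne]
  · simp only [braidS, sCoeff, Prod.mk.injEq, if_neg h]
    split_ifs <;> grind

theorem mul_braidS_apply_swap_of_lt (M : Matrix (Fin n × Fin n) (Fin n × Fin n) ℂ)
    (hij : i < j) (p : Fin n × Fin n) : (M * braidS n q) p (j, i) = M p (i, j) := by
  simp [Matrix.mul_apply, braidS_apply_swap_of_lt q hij]

end braidS

theorem A2_diagonal {n : ℕ} (d : Fin n → ℂ) :
    A2 (diagonal d) = diagonal fun r => d r.2 := by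
  rw [A2, ← diagonal_one, diagonal_kronecker_diagonal]
  simp

theorem RE.diagonal_eq_of_lt {n : ℕ} {q : ℂ} (hq : q ≠ 0) (hq2 : q ^ 2 ≠ 1) {d : Fin n → ℂ}
    (hRE : RE n q (diagonal d)) {i j : Fin n} (hij : i < j) (hj : d j ≠ 0) : d i = d j := by
  have hentry := congrFun (congrFun hRE (i, j)) (j, i)
  simp only [A2_diagonal, mul_diagonal, mul_braidS_apply_swap_of_lt q _ hij, diagonal_mul,
    braidS_apply_self_of_lt q hij] at hentry
  have : (q - q⁻¹) * d j * (d i - d j) = 0 := by linear_combination hentry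
  simpa [sub_inv_ne_zero_of_sq_ne_one hq hq2, hj, sub_eq_zero] using this

theorem RE_diagonal_classification_general (n : ℕ) (q : ℂ) (hq : q ≠ 0)
    (hq2 : q ^ 2 ≠ 1) (A : Matrix (Fin n) (Fin n) ℂ) (hA : RE n q A)
    (hdiag : ∀ i j : Fin n, i ≠ j → A i j = 0) :
    ∃ (lam : ℂ) (k : ℕ), k ≤ n ∧
      ∀ i j : Fin n, A i j = if i = j ∧ (i : ℕ) + 1 ≤ k then lam else 0 := by
  have hAd : diagonal A.diag = A := Matrix.IsDiag.diagonal_diag fun i j => hdiag i j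
  rw [← hAd] at hA
  obtain ⟨lam, k, hk, hseg⟩ := exists_const_initial_segment A.diag fun i j hle hj =>
    hle.lt_or_eq.elim (fun hlt => hA.diagonal_eq_of_lt hq hq2 hlt hj) (congrArg _)
  refine ⟨lam, k, hk, fun i j => ?_⟩
  by_cases hij : i = j
  · subst hij
    simpa using hseg i
  · simp [hij, hdiag i j hij]

/-- The diagonal solutions of the reflection equation are exactly the matrices
`P_k = λ Σ_{i=1}^{k} e^i_i`: a constant `λ` in the first `k` diagonal positions
and `0` elsewhere. -/
theorem RE_diagonal_classification (n : ℕ) (hn : 1 ≤ n) (q : ℂ) (hq : q ≠ 0)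
    (hq2 : q ^ 2 ≠ 1) (A : Matrix (Fin n) (Fin n) ℂ) (hA : RE n q A)
    (hdiag : ∀ i j : Fin n, i ≠ j → A i j = 0) :
    ∃ (lam : ℂ) (k : ℕ), k ≤ n ∧
      ∀ i j : Fin n, A i j = if i = j ∧ (i : ℕ) + 1 ≤ k then lam else 0 :=
  RE_diagonal_classification_general n q hq hq2 A hA hdiag
end
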